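/- arXiv:2506.21027 — 7 statements merged into one kernel-verified Lean document; each statement's English description precedes it below -/
import Mathlib

section
/- (Lemma 1, part 1.) Suppose (I_t)_{t≥1} are nonnegative integrable random variables on a probability space such that for every t > K the conditional expectation of I_t given σ(I_1, …, I_{t−1}) equals R·Σ_{k=1}^K w_k I_{t−k} almost surely, and suppose the vector of expectations (E(I_1), …, E(I_K)) is not the zero vector. Then E(I_t)·ρ(R)^{−t} converges to a strictly positive constant as t → ∞. -/
open Finset MeasureTheory Filter

theorem avg_rec_tendsto (K : ℕ) (hK : 1 ≤ K) (p a : ℕ → ℝ)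
    (hp : ∀ k ∈ Finset.Icc 1 K, 0 < p k)
    (hps : ∑ k ∈ Finset.Icc 1 K, p k = 1)
    (ha0 : ∀ t, 1 ≤ t → 0 ≤ a t)
    (hrec : ∀ t, K < t → a t = ∑ k ∈ Finset.Icc 1 K, p k * a (t - k))
    (hpos : ∃ s ∈ Finset.Icc 1 K, 0 < a s) :
    ∃ c : ℝ, 0 < c ∧ Tendsto a atTop (nhds c) := by
  have hne : ∀ t : ℕ, (Finset.Icc (t+1) (t+K)).Nonempty := fun t =>
    ⟨t+1, Finset.mem_Icc.mpr ⟨le_refl _, by omega⟩⟩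
  set Mx : ℕ → ℝ := fun t => (Finset.Icc (t+1) (t+K)).sup' (hne t) a with hMxdef
  set mn : ℕ → ℝ := fun t => (Finset.Icc (t+1) (t+K)).inf' (hne t) a with hmndef
  -- all later values are between mn t and Mx t
  have hbound : ∀ t, K ≤ t → ∀ s, t < s → mn t ≤ a s ∧ a s ≤ Mx t := by
    intro t ht s
    induction s using Nat.strong_induction_on with
    | _ s IH =>
      intro hs
      by_cases hsK : s ≤ t + K
      · have hmem : s ∈ Finset.Icc (t+1) (t+K) := Finset.mem_Icc.mpr ⟨hs, hsK⟩
        exact ⟨Finset.inf'_le _ hmem, Finset.le_sup' _ hmem⟩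
      · push_neg at hsK
        have hKs : K < s := by omega
        have hterm : ∀ k ∈ Finset.Icc 1 K, mn t ≤ a (s - k) ∧ a (s - k) ≤ Mx t := by
          intro k hk
          rw [Finset.mem_Icc] at hk
          exact IH (s - k) (by omega) (by omega)
        rw [hrec s hKs]
        constructor
        · calc mn t = ∑ k ∈ Finset.Icc 1 K, p k * mn t := by
                rw [← Finset.sum_mul, hps, one_mul]
            _ ≤ _ := Finset.sum_le_sum fun k hk =>
                mul_le_mul_of_nonneg_left ((hterm k hk).1) (hp k hk).le
        · calc (∑ k ∈ Finset.Icc 1 K, p k * a (s - k))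
              ≤ ∑ k ∈ Finset.Icc 1 K, p k * Mx t := Finset.sum_le_sum fun k hk =>
                mul_le_mul_of_nonneg_left ((hterm k hk).2) (hp k hk).le
            _ = Mx t := by rw [← Finset.sum_mul, hps, one_mul]
  have hMmono : ∀ t t', K ≤ t → t ≤ t' → Mx t' ≤ Mx t := by
    intro t t' ht htt
    exact Finset.sup'_le _ _ fun s hs =>
      (hbound t ht s (by rw [Finset.mem_Icc] at hs; omega)).2
  have hmmono : ∀ t t', K ≤ t → t ≤ t' → mn t ≤ mn t' := by
    intro t t' ht htt
    exact Finset.le_inf' _ _ fun s hs =>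
      (hbound t ht s (by rw [Finset.mem_Icc] at hs; omega)).1
  have hmM : ∀ t, mn t ≤ Mx t := by
    intro t
    obtain ⟨s, hs⟩ := hne t
    exact le_trans (Finset.inf'_le _ hs) (Finset.le_sup' _ hs)
  have hmn0 : ∀ t, 0 ≤ mn t := by
    intro t
    refine Finset.le_inf' _ _ fun s hs => ?_
    rw [Finset.mem_Icc] at hs
    exact ha0 s (by omega)
  have hIccne : (Finset.Icc 1 K).Nonempty := ⟨1, Finset.mem_Icc.mpr ⟨le_refl _, hK⟩⟩
  set q : ℝ := (Finset.Icc 1 K).inf' hIccne p with hqdef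
  have hq0 : 0 < q := by
    rw [hqdef, Finset.lt_inf'_iff]
    exact hp
  have hqle : ∀ k ∈ Finset.Icc 1 K, q ≤ p k := fun k hk => Finset.inf'_le _ hk
  have hq1 : q ≤ 1 := by
    obtain ⟨k0, hk0, hk0e⟩ := Finset.exists_mem_eq_inf' hIccne p
    rw [hqdef, hk0e]
    calc p k0 ≤ ∑ k ∈ Finset.Icc 1 K, p k :=
          Finset.single_le_sum (fun k hk => (hp k hk).le) hk0
      _ = 1 := hps
  -- contraction
  have hstep : ∀ t, K ≤ t → ∀ j, 1 ≤ j →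
      a (t + K + j) ≤ Mx t - q ^ j * (Mx t - mn t) := by
    intro t ht j hj
    have hD : (0:ℝ) ≤ Mx t - mn t := sub_nonneg.mpr (hmM t)
    induction j, hj using Nat.le_induction with
    | base =>
      obtain ⟨s₀, hs₀, hs₀e⟩ := Finset.exists_mem_eq_inf' (hne t) a
      rw [Finset.mem_Icc] at hs₀
      have hKs : K < t + K + 1 := by omega
      have hk₀mem : t + K + 1 - s₀ ∈ Finset.Icc 1 K := Finset.mem_Icc.mpr ⟨by omega, by omega⟩
      rw [hrec _ hKs, ← Finset.add_sum_erase _ _ hk₀mem]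
      have h1 : a (t + K + 1 - (t + K + 1 - s₀)) = mn t := by
        have : t + K + 1 - (t + K + 1 - s₀) = s₀ := by omega
        rw [this, ← hs₀e]
      have h2 : ∑ k ∈ (Finset.Icc 1 K).erase (t + K + 1 - s₀), p k * a (t + K + 1 - k) ≤
          ∑ k ∈ (Finset.Icc 1 K).erase (t + K + 1 - s₀), p k * Mx t := by
        refine Finset.sum_le_sum fun k hk => ?_
        have hk' := Finset.mem_of_mem_erase hk
        rw [Finset.mem_Icc] at hk'
        have hmem : t + K + 1 - k ∈ Finset.Icc (t+1) (t+K) :=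
          Finset.mem_Icc.mpr ⟨by omega, by omega⟩
        exact mul_le_mul_of_nonneg_left (Finset.le_sup' a hmem)
          (hp k (Finset.mem_of_mem_erase hk)).le
      have h3 : ∑ k ∈ (Finset.Icc 1 K).erase (t + K + 1 - s₀), p k * Mx t =
          (1 - p (t + K + 1 - s₀)) * Mx t := by
        rw [← Finset.sum_mul]
        congr 1
        have := Finset.add_sum_erase _ p hk₀mem
        linarith [hps]
      have hq' : q * (Mx t - mn t) ≤ p (t + K + 1 - s₀) * (Mx t - mn t) :=
        mul_le_mul_of_nonneg_right (hqle _ hk₀mem) hD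
      rw [h1, pow_one]
      nlinarith [h2, h3]
    | succ j hj IH =>
      have hKs : K < t + K + (j + 1) := by omega
      have h1mem : (1:ℕ) ∈ Finset.Icc 1 K := Finset.mem_Icc.mpr ⟨le_refl _, hK⟩
      rw [hrec _ hKs, ← Finset.add_sum_erase _ _ h1mem]
      have hs1 : t + K + (j + 1) - 1 = t + K + j := by omega
      have h2 : ∑ k ∈ (Finset.Icc 1 K).erase 1, p k * a (t + K + (j+1) - k) ≤
          ∑ k ∈ (Finset.Icc 1 K).erase 1, p k * Mx t := by
        refine Finset.sum_le_sum fun k hk => ?_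
        have hk' := Finset.mem_of_mem_erase hk
        rw [Finset.mem_Icc] at hk'
        exact mul_le_mul_of_nonneg_left
          ((hbound t ht (t + K + (j+1) - k) (by omega)).2)
          (hp k (Finset.mem_of_mem_erase hk)).le
      have h3 : ∑ k ∈ (Finset.Icc 1 K).erase 1, p k * Mx t = (1 - p 1) * Mx t := by
        rw [← Finset.sum_mul]
        congr 1
        have := Finset.add_sum_erase _ p h1mem
        linarith [hps]
      have hIH' : p 1 * a (t + K + j) ≤ p 1 * (Mx t - q ^ j * (Mx t - mn t)) :=
        mul_le_mul_of_nonneg_left IH (hp 1 h1mem).le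
      have hq' : q * (q ^ j * (Mx t - mn t)) ≤ p 1 * (q ^ j * (Mx t - mn t)) :=
        mul_le_mul_of_nonneg_right (hqle 1 h1mem)
          (mul_nonneg (pow_nonneg hq0.le j) hD)
      rw [hs1, pow_succ]
      nlinarith [h2, h3, hIH']
  have hMc : ∀ t, K ≤ t → Mx (t + K) ≤ Mx t - q ^ K * (Mx t - mn t) := by
    intro t ht
    refine Finset.sup'_le _ _ fun s hs => ?_
    rw [Finset.mem_Icc] at hs
    have hseq : s = t + K + (s - (t + K)) := by omega
    have h1 : 1 ≤ s - (t + K) := by omega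
    have h2 : s - (t + K) ≤ K := by omega
    have hst := hstep t ht (s - (t + K)) h1
    rw [← hseq] at hst
    have hqq : q ^ K ≤ q ^ (s - (t + K)) := pow_le_pow_of_le_one hq0.le hq1 h2
    have hD : (0:ℝ) ≤ Mx t - mn t := sub_nonneg.mpr (hmM t)
    nlinarith [mul_le_mul_of_nonneg_right hqq hD]
  -- the gap sequence
  set d : ℕ → ℝ := fun n => Mx (K + n) - mn (K + n) with hddef
  have hd0 : ∀ n, 0 ≤ d n := fun n => sub_nonneg.mpr (hmM (K + n))
  have hdanti : Antitone d := antitone_nat_of_succ_le fun n => by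
    have h1 := hMmono (K + n) (K + (n+1)) (by omega) (by omega)
    have h2 := hmmono (K + n) (K + (n+1)) (by omega) (by omega)
    simp only [hddef]
    linarith
  have hr0 : (0:ℝ) ≤ 1 - q ^ K := by
    have : q ^ K ≤ 1 := pow_le_one₀ hq0.le hq1
    linarith
  have hr1 : 1 - q ^ K < 1 := by
    have : 0 < q ^ K := pow_pos hq0 K
    linarith
  have hdc : ∀ n, d (n + K) ≤ (1 - q ^ K) * d n := by
    intro n
    have h1 := hMc (K + n) (by omega)
    have h2 := hmmono (K + n) (K + n + K) (by omega) (by omega)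
    have h3 : K + (n + K) = K + n + K := by omega
    simp only [hddef, h3]
    nlinarith
  have hgeo : ∀ n, d (n * K) ≤ (1 - q ^ K) ^ n * d 0 := by
    intro n
    induction n with
    | zero => simp only [Nat.zero_mul, pow_zero, one_mul]; exact le_refl _
    | succ n IH =>
      have h1 : (n + 1) * K = n * K + K := by ring
      rw [h1]
      calc d (n * K + K) ≤ (1 - q ^ K) * d (n * K) := hdc (n * K)
        _ ≤ (1 - q ^ K) * ((1 - q ^ K) ^ n * d 0) :=
            mul_le_mul_of_nonneg_left IH hr0
        _ = (1 - q ^ K) ^ (n + 1) * d 0 := by ring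
  -- d tends to 0
  have hdbdd : BddBelow (Set.range d) := ⟨0, fun x ⟨n, hn⟩ => hn ▸ hd0 n⟩
  have hdtend : Tendsto d atTop (nhds (⨅ n, d n)) := tendsto_atTop_ciInf hdanti hdbdd
  have hgtend : Tendsto (fun n => (1 - q ^ K) ^ n * d 0) atTop (nhds 0) := by
    have := tendsto_pow_atTop_nhds_zero_of_lt_one hr0 hr1
    simpa using this.mul_const (d 0)
  have hinf0 : (⨅ n, d n) = 0 := by
    have hle : (⨅ n, d n) ≤ 0 := by
      refine ge_of_tendsto hgtend (Filter.Eventually.of_forall fun n => ?_)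
      exact le_trans (ciInf_le hdbdd (n * K)) (hgeo n)
    have hge : 0 ≤ ⨅ n, d n := le_ciInf hd0
    linarith
  rw [hinf0] at hdtend
  -- Mx tends to L
  set b : ℕ → ℝ := fun n => Mx (K + n) with hbdef
  have hbanti : Antitone b := antitone_nat_of_succ_le fun n =>
    hMmono (K + n) (K + (n+1)) (by omega) (by omega)
  have hbbdd : BddBelow (Set.range b) :=
    ⟨0, fun x ⟨n, hn⟩ => hn ▸ le_trans (hmn0 (K + n)) (hmM (K + n))⟩
  set L : ℝ := ⨅ n, b n with hLdef
  have hbtend : Tendsto b atTop (nhds L) := tendsto_atTop_ciInf hbanti hbbdd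
  -- mn tends to L
  have hmtend : Tendsto (fun n => mn (K + n)) atTop (nhds L) := by
    have h : (fun n => mn (K + n)) = fun n => b n - d n := by
      funext n
      simp only [hbdef, hddef]
      ring
    rw [h]
    simpa using hbtend.sub hdtend
  -- a tends to L
  have hatend' : Tendsto (fun n => a (n + (2 * K + 1))) atTop (nhds L) := by
    refine tendsto_of_tendsto_of_tendsto_of_le_of_le hmtend hbtend
      (fun n => (hbound (K + n) (by omega) (n + (2 * K + 1)) (by omega)).1)
      (fun n => (hbound (K + n) (by omega) (n + (2 * K + 1)) (by omega)).2)
  have hatend : Tendsto a atTop (nhds L) :=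
    (Filter.tendsto_add_atTop_iff_nat (2 * K + 1)).mp hatend'
  -- positivity
  have hapos : ∀ t, K + 1 ≤ t → 0 < a t := by
    intro t
    induction t using Nat.strong_induction_on with
    | _ t IH =>
      intro ht
      rw [hrec t (by omega)]
      rcases Nat.lt_or_ge t (K + 2) with h | h
      · obtain ⟨s₀, hs₀, hs₀pos⟩ := hpos
        rw [Finset.mem_Icc] at hs₀
        refine Finset.sum_pos' (fun k hk => ?_) ⟨t - s₀, ?_, ?_⟩
        · have hk' := hk
          rw [Finset.mem_Icc] at hk'
          exact mul_nonneg (hp k hk).le (ha0 _ (by omega))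
        · exact Finset.mem_Icc.mpr ⟨by omega, by omega⟩
        · have hts : t - (t - s₀) = s₀ := by omega
          rw [hts]
          exact mul_pos (hp _ (Finset.mem_Icc.mpr ⟨by omega, by omega⟩)) hs₀pos
      · refine Finset.sum_pos' (fun k hk => ?_) ⟨1, Finset.mem_Icc.mpr ⟨le_refl _, hK⟩, ?_⟩
        · have hk' := hk
          rw [Finset.mem_Icc] at hk'
          exact mul_nonneg (hp k hk).le (ha0 _ (by omega))
        · exact mul_pos (hp 1 (Finset.mem_Icc.mpr ⟨le_refl _, hK⟩))
            (IH (t - 1) (by omega) (by omega))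
  have hmnpos : 0 < mn (K + 1) := by
    rw [hmndef]
    rw [Finset.lt_inf'_iff]
    intro s hs
    rw [Finset.mem_Icc] at hs
    exact hapos s (by omega)
  have hLpos : 0 < L := by
    have hle : mn (K + 1) ≤ L := by
      refine le_ciInf fun n => ?_
      match n with
      | 0 =>
        calc mn (K + 1) ≤ Mx (K + 1) := hmM _
          _ ≤ Mx (K + 0) := hMmono _ _ (by omega) (by omega)
      | n + 1 =>
        calc mn (K + 1) ≤ mn (K + (n + 1)) := hmmono _ _ (by omega) (by omega)
          _ ≤ Mx (K + (n + 1)) := hmM _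
    linarith
  exact ⟨L, hLpos, hatend⟩

/-- Lemma 1, part 1: if the conditional expectation of `I_t` given the past equals
`R ∑_{k=1}^K w_k I_{t−k}` and the initial expectations are not all zero, then
`E(I_t) ρ(R)^{−t}` converges to a strictly positive constant. -/
theorem expectation_growth_rate
    {Ω : Type*} {mΩ : MeasurableSpace Ω} (μ : Measure Ω) [IsProbabilityMeasure μ]
    (K : ℕ) (hK : 1 ≤ K) (w : ℕ → ℝ)
    (hw_pos : ∀ k ∈ Finset.Icc 1 K, 0 < w k)
    (hw_sum : ∑ k ∈ Finset.Icc 1 K, w k = 1)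
    (R : ℝ) (hR : 0 < R)
    (rho : ℝ) (hrho_pos : 0 < rho)
    (hrho_eq : 1 / R = ∑ k ∈ Finset.Icc 1 K, w k * rho ^ (-(k : ℤ)))
    (I : ℕ → Ω → ℝ)
    (hmeas : ∀ t, Measurable (I t))
    (hnonneg : ∀ t, 1 ≤ t → ∀ ω, 0 ≤ I t ω)
    (hint : ∀ t, 1 ≤ t → Integrable (I t) μ)
    (hcond : ∀ t, K < t →
      μ[I t | ⨆ s ∈ Finset.Icc 1 (t - 1),
          MeasurableSpace.comap (I s) (inferInstance : MeasurableSpace ℝ)]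
        =ᵐ[μ] fun ω => R * ∑ k ∈ Finset.Icc 1 K, w k * I (t - k) ω)
    (hinit : ∃ s ∈ Finset.Icc 1 K, (∫ ω, I s ω ∂μ) ≠ 0) :
    ∃ c : ℝ, 0 < c ∧
      Tendsto (fun t : ℕ => (∫ ω, I t ω ∂μ) * rho ^ (-(t : ℤ))) atTop (nhds c) := by
  have hrne : rho ≠ 0 := hrho_pos.ne'
  -- mean recurrence
  have hrec_m : ∀ t, K < t →
      (∫ ω, I t ω ∂μ) = R * ∑ k ∈ Finset.Icc 1 K, w k * (∫ ω, I (t - k) ω ∂μ) := by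
    intro t ht
    have hGle : (⨆ s ∈ Finset.Icc 1 (t - 1),
        MeasurableSpace.comap (I s) (inferInstance : MeasurableSpace ℝ)) ≤ mΩ :=
      iSup₂_le fun s _ => (hmeas s).comap_le
    have h1 : ∫ ω, (μ[I t | ⨆ s ∈ Finset.Icc 1 (t - 1),
        MeasurableSpace.comap (I s) (inferInstance : MeasurableSpace ℝ)]) ω ∂μ
        = ∫ ω, I t ω ∂μ := integral_condExp hGle
    have h2 : ∫ ω, (μ[I t | ⨆ s ∈ Finset.Icc 1 (t - 1),
        MeasurableSpace.comap (I s) (inferInstance : MeasurableSpace ℝ)]) ω ∂μ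
        = ∫ ω, (R * ∑ k ∈ Finset.Icc 1 K, w k * I (t - k) ω) ∂μ :=
      integral_congr_ae (hcond t ht)
    rw [← h1, h2, integral_const_mul]
    congr 1
    rw [integral_finset_sum _ (fun k hk => ?_)]
    · exact Finset.sum_congr rfl fun k _ => integral_const_mul _ _
    · rw [Finset.mem_Icc] at hk
      exact (hint (t - k) (by omega)).const_mul _
  have hrec_m' : ∀ t, K < t →
      (∫ ω, I t ω ∂μ) = R * ∑ k ∈ Finset.Icc 1 K, w k * (∫ ω, I (t - k) ω ∂μ) := hrec_m
  refine avg_rec_tendsto K hK (fun k => R * w k * rho ^ (-(k : ℤ)))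
    (fun t => (∫ ω, I t ω ∂μ) * rho ^ (-(t : ℤ))) ?_ ?_ ?_ ?_ ?_
  · intro k hk
    exact mul_pos (mul_pos hR (hw_pos k hk)) (zpow_pos hrho_pos _)
  · have : ∑ k ∈ Finset.Icc 1 K, R * w k * rho ^ (-(k : ℤ))
        = R * ∑ k ∈ Finset.Icc 1 K, w k * rho ^ (-(k : ℤ)) := by
      rw [Finset.mul_sum]; exact Finset.sum_congr rfl fun k _ => by ring
    rw [this, ← hrho_eq]
    field_simp
  · intro t ht
    exact mul_nonneg (integral_nonneg (hnonneg t ht)) (zpow_pos hrho_pos _).le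
  · intro t ht
    beta_reduce
    have hterm : ∀ k ∈ Finset.Icc 1 K,
        R * w k * rho ^ (-(k : ℤ)) * ((∫ ω, I (t - k) ω ∂μ) * rho ^ (-((t - k : ℕ) : ℤ)))
        = (R * rho ^ (-(t : ℤ))) * (w k * (∫ ω, I (t - k) ω ∂μ)) := by
      intro k hk
      rw [Finset.mem_Icc] at hk
      have hz : rho ^ (-(k : ℤ)) * rho ^ (-((t - k : ℕ) : ℤ)) = rho ^ (-(t : ℤ)) := by
        rw [← zpow_add₀ hrne]
        congr 1
        omega
      calc R * w k * rho ^ (-(k : ℤ)) * ((∫ ω, I (t - k) ω ∂μ) * rho ^ (-((t - k : ℕ) : ℤ)))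
          = (R * (w k * (∫ ω, I (t - k) ω ∂μ))) *
            (rho ^ (-(k : ℤ)) * rho ^ (-((t - k : ℕ) : ℤ))) := by ring
        _ = (R * rho ^ (-(t : ℤ))) * (w k * (∫ ω, I (t - k) ω ∂μ)) := by rw [hz]; ring
    rw [Finset.sum_congr rfl hterm, ← Finset.mul_sum, hrec_m' t ht]
    ring
  · obtain ⟨s, hs, hsne⟩ := hinit
    refine ⟨s, hs, ?_⟩
    rw [Finset.mem_Icc] at hs
    have h0 : 0 ≤ ∫ ω, I s ω ∂μ := integral_nonneg (hnonneg s (by omega))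
    exact mul_pos (lt_of_le_of_ne h0 (Ne.symm hsne)) (zpow_pos hrho_pos _)
end

section
/- Let S = {(j,k) ∈ ℕ×ℕ : 0 ≤ j ≤ k ≤ K−1} and define the linear map T : ℝ^S → ℝ^S by (T C)(0,0) = R^2·Σ_{j=1}^K Σ_{k=1}^K w_j w_k C(min(j,k)−1, max(j,k)−1), (T C)(0,k) = R·Σ_{j=1}^K w_j C(min(j−1,k−1), max(j−1,k−1)) for 1 ≤ k ≤ K−1, and (T C)(j,k) = C(j−1,k−1) for 1 ≤ j ≤ k ≤ K−1. Then the vector v ∈ ℝ^S with v(j,k) = ρ(R)^{−j−k} satisfies T v = ρ(R)^2 · v; that is, ρ(R)^2 is an eigenvalue of T with eigenvector (ρ(R)^{−j−k})_{(j,k)∈S}. -/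
open Finset

/-- The vector `v(j,k) = ρ(R)^{−j−k}` on the index set
`S = {(j,k) : 0 ≤ j ≤ k ≤ K−1}` is an eigenvector, with eigenvalue `ρ(R)²`, of the linear
map `T` driving the covariance recursion. -/
theorem covariance_operator_eigenvector
    (K : ℕ) (hK : 1 ≤ K) (w : ℕ → ℝ)
    (hw_pos : ∀ k ∈ Finset.Icc 1 K, 0 < w k)
    (hw_sum : ∑ k ∈ Finset.Icc 1 K, w k = 1)
    (R : ℝ) (hR : 0 < R)
    (rho : ℝ) (hrho_pos : 0 < rho)
    (hrho_eq : 1 / R = ∑ k ∈ Finset.Icc 1 K, w k * rho ^ (-(k : ℤ)))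
    (T : (ℕ × ℕ → ℝ) → (ℕ × ℕ → ℝ))
    (hT00 : ∀ C : ℕ × ℕ → ℝ,
      T C (0, 0) = R ^ 2 * ∑ j ∈ Finset.Icc 1 K, ∑ k ∈ Finset.Icc 1 K,
        w j * w k * C (min j k - 1, max j k - 1))
    (hT0k : ∀ C : ℕ × ℕ → ℝ, ∀ k : ℕ, 1 ≤ k → k ≤ K - 1 →
      T C (0, k) = R * ∑ j ∈ Finset.Icc 1 K,
        w j * C (min (j - 1) (k - 1), max (j - 1) (k - 1)))
    (hTjk : ∀ C : ℕ × ℕ → ℝ, ∀ j k : ℕ, 1 ≤ j → j ≤ k → k ≤ K - 1 →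
      T C (j, k) = C (j - 1, k - 1))
    (v : ℕ × ℕ → ℝ)
    (hv : ∀ p : ℕ × ℕ, v p = rho ^ (-((p.1 : ℤ) + (p.2 : ℤ)))) :
    ∀ j k : ℕ, j ≤ k → k ≤ K - 1 → T v (j, k) = rho ^ 2 * v (j, k) := by
  have hρ : rho ≠ 0 := ne_of_gt hrho_pos
  have hRne : R ≠ 0 := ne_of_gt hR
  have hv' : ∀ a b : ℕ, v (a, b) = rho ^ (-((a : ℤ) + (b : ℤ))) := fun a b => hv (a, b)
  have hsq : rho ^ 2 = rho ^ (2 : ℤ) := by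
    rw [← zpow_natCast]; norm_num
  have key : ∑ k ∈ Finset.Icc 1 K, w k * rho ^ (-(k : ℤ)) = 1 / R := hrho_eq.symm
  intro j k hjk hkK
  rcases Nat.eq_zero_or_pos j with hj | hj
  · subst hj
    rcases Nat.eq_zero_or_pos k with hk | hk
    · subst hk
      rw [hT00]
      have hsum : ∑ a ∈ Finset.Icc 1 K, ∑ b ∈ Finset.Icc 1 K,
          w a * w b * v (min a b - 1, max a b - 1)
          = ∑ a ∈ Finset.Icc 1 K, ∑ b ∈ Finset.Icc 1 K,
            (w a * rho ^ (-(a : ℤ)) * rho ^ (2 : ℤ)) * (w b * rho ^ (-(b : ℤ))) := by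
        refine Finset.sum_congr rfl fun a ha => Finset.sum_congr rfl fun b hb => ?_
        obtain ⟨ha1, -⟩ := Finset.mem_Icc.mp ha
        obtain ⟨hb1, -⟩ := Finset.mem_Icc.mp hb
        rw [hv']
        have he : -(((min a b - 1 : ℕ) : ℤ) + ((max a b - 1 : ℕ) : ℤ))
            = -(a : ℤ) + (-(b : ℤ) + 2) := by omega
        rw [he, zpow_add₀ hρ, zpow_add₀ hρ]
        ring
      rw [hsum, ← Finset.sum_mul_sum, ← Finset.sum_mul, key, hv']
      simp only [Nat.cast_zero, add_zero, neg_zero, zpow_zero, mul_one, ← hsq]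
      field_simp
    · rw [hT0k v k hk hkK]
      have hsum : ∑ a ∈ Finset.Icc 1 K,
          w a * v (min (a - 1) (k - 1), max (a - 1) (k - 1))
          = ∑ a ∈ Finset.Icc 1 K, (w a * rho ^ (-(a : ℤ))) * rho ^ (2 - (k : ℤ)) := by
        refine Finset.sum_congr rfl fun a ha => ?_
        obtain ⟨ha1, -⟩ := Finset.mem_Icc.mp ha
        rw [hv']
        have he : -(((min (a - 1) (k - 1) : ℕ) : ℤ) + ((max (a - 1) (k - 1) : ℕ) : ℤ))
            = -(a : ℤ) + (2 - (k : ℤ)) := by omega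
        rw [he, zpow_add₀ hρ]
        ring
      rw [hsum, ← Finset.sum_mul, key, hv']
      have h2 : (2 : ℝ) / 1 = 2 := by norm_num
      rw [show (2 - (k : ℤ)) = 2 + -((0 : ℤ) + (k : ℤ)) by push_cast; ring,
        zpow_add₀ hρ, ← hsq]
      field_simp
      ring
  · rw [hTjk v j k hj hjk hkK, hv', hv']
    have he : -(((j - 1 : ℕ) : ℤ) + ((k - 1 : ℕ) : ℤ))
        = 2 + -((j : ℤ) + (k : ℤ)) := by omega
    rw [he, zpow_add₀ hρ, ← hsq]
end

section
/- Assume T > K_m and m_{t−K_m, t} > 0 for every t ∈ {1, …, T}. Then for every choice of real numbers (I_s)_{s = T−K_m+1}^{T−1} there exists a unique tuple of real numbers (I_s)_{s = 1−K_m}^{T−K_m} such that Σ_{s = t−K_m}^{t−1} I_s·m_{s,t} = D_t holds for every t ∈ {1, …, T}. -/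
open Finset


noncomputable def buildI (Km T : ℕ) (m : ℤ → ℤ → ℝ) (D J : ℤ → ℝ) : ℕ → ℝ
  | n =>
    (D ((T:ℤ) - n) -
      ∑ s ∈ (Finset.Icc ((T:ℤ) - Km - n + 1) ((T:ℤ) - n - 1)).attach,
        (if h : (s:ℤ) ≤ (T:ℤ) - Km then
            buildI Km T m D J ((T:ℤ) - Km - (s:ℤ)).toNat
          else J s) * m s ((T:ℤ) - n)) /
      m ((T:ℤ) - Km - n) ((T:ℤ) - n)
termination_by n => n
decreasing_by
  have hs := s.2
  simp only [Finset.mem_Icc] at hs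
  omega

lemma buildI_spec (Km T : ℕ) (m : ℤ → ℤ → ℝ) (D J : ℤ → ℝ) (t : ℤ)
    (ht1 : 1 ≤ t) (ht2 : t ≤ (T:ℤ)) (hm : m (t - Km) t ≠ 0) :
    buildI Km T m D J ((T:ℤ) - t).toNat * m (t - Km) t
      = D t - ∑ s ∈ Finset.Icc (t - Km + 1) (t - 1),
          (if (s:ℤ) ≤ (T:ℤ) - Km then buildI Km T m D J ((T:ℤ) - Km - s).toNat
           else J s) * m s t := by
  have hn : (((T:ℤ) - t).toNat : ℤ) = (T:ℤ) - t := Int.toNat_of_nonneg (by omega)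
  rw [buildI]
  rw [hn]
  have h1 : (T:ℤ) - ((T:ℤ) - t) = t := by ring
  have h2 : (T:ℤ) - (Km:ℤ) - ((T:ℤ) - t) = t - Km := by ring
  rw [h1, h2]
  simp only [dite_eq_ite]
  rw [Finset.sum_attach _ (fun s : ℤ =>
    (if (s:ℤ) ≤ (T:ℤ) - Km then buildI Km T m D J ((T:ℤ) - Km - s).toNat else J s) * m s t)]
  exact div_mul_cancel₀ _ hm

/-- If `T > K_m` and `m_{t−K_m,t} > 0` for all `t`, then for every choice of values
`I_s`, `s = T−K_m+1, …, T−1` (encoded by the function `J` fixing `I` outside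
`{1−K_m, …, T−K_m}`), there is a unique completion `(I_s)_{s=1−K_m}^{T−K_m}` solving the
deconvolution equations `∑_{s=t−K_m}^{t−1} I_s m_{s,t} = D_t` for all `t = 1, …, T`. -/
theorem deconvolution_unique_given_tail
    (Km T : ℕ) (hKm : 1 ≤ Km) (hT : 1 ≤ T)
    (m : ℤ → ℤ → ℝ)
    (hm_nonneg : ∀ s t : ℤ, s ∈ Finset.Icc (1 - (Km : ℤ)) ((T : ℤ) - 1) →
      t ∈ Finset.Icc (1 : ℤ) (T : ℤ) → 0 ≤ m s t)
    (hm_zero : ∀ s t : ℤ, s ∈ Finset.Icc (1 - (Km : ℤ)) ((T : ℤ) - 1) →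
      t ∈ Finset.Icc (1 : ℤ) (T : ℤ) → ¬(1 ≤ t - s ∧ t - s ≤ (Km : ℤ)) → m s t = 0)
    (D : ℤ → ℝ)
    (hTKm : Km < T)
    (hm_pos : ∀ t ∈ Finset.Icc (1 : ℤ) (T : ℤ), 0 < m (t - Km) t) :
    ∀ J : ℤ → ℝ, ∃! I : ℤ → ℝ,
      (∀ s : ℤ, s ∉ Finset.Icc (1 - (Km : ℤ)) ((T : ℤ) - Km) → I s = J s) ∧
      (∀ t ∈ Finset.Icc (1 : ℤ) (T : ℤ),
        ∑ s ∈ Finset.Icc (t - Km) (t - 1), I s * m s t = D t) := by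
  intro J
  set I : ℤ → ℝ := fun s =>
    if 1 - (Km:ℤ) ≤ s ∧ s ≤ (T:ℤ) - Km then buildI Km T m D J ((T:ℤ) - Km - s).toNat
    else J s with hI
  have hIout : ∀ s : ℤ, ¬(1 - (Km:ℤ) ≤ s ∧ s ≤ (T:ℤ) - Km) → I s = J s := by
    intro s hs; simp only [hI, if_neg hs]
  have hIin : ∀ s : ℤ, 1 - (Km:ℤ) ≤ s → s ≤ (T:ℤ) - Km →
      I s = buildI Km T m D J ((T:ℤ) - Km - s).toNat := by
    intro s h1 h2; simp only [hI, if_pos (⟨h1, h2⟩ : _ ∧ _)]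
  have hsplit : ∀ t : ℤ, 1 ≤ t →
      Finset.Icc (t - (Km:ℤ)) (t - 1) = insert (t - (Km:ℤ)) (Finset.Icc (t - Km + 1) (t - 1)) := by
    intro t ht; ext x; simp only [Finset.mem_Icc, Finset.mem_insert]; omega
  have hnotmem : ∀ t : ℤ, t - (Km:ℤ) ∉ Finset.Icc (t - (Km:ℤ) + 1) (t - 1) := by
    intro t; simp only [Finset.mem_Icc]; omega
  -- the equations hold for I
  have heq : ∀ t ∈ Finset.Icc (1:ℤ) (T:ℤ),
      ∑ s ∈ Finset.Icc (t - Km) (t - 1), I s * m s t = D t := by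
    intro t ht
    simp only [Finset.mem_Icc] at ht
    have hm := (hm_pos t (by simp only [Finset.mem_Icc]; omega)).ne'
    rw [hsplit t ht.1, Finset.sum_insert (hnotmem t)]
    have hItKm : I (t - Km) = buildI Km T m D J ((T:ℤ) - t).toNat := by
      rw [hIin (t - Km) (by omega) (by omega)]
      congr 1
      omega
    rw [hItKm, buildI_spec Km T m D J t ht.1 ht.2 hm]
    have hrest : ∑ s ∈ Finset.Icc (t - (Km:ℤ) + 1) (t - 1), I s * m s t
        = ∑ s ∈ Finset.Icc (t - (Km:ℤ) + 1) (t - 1),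
            (if (s:ℤ) ≤ (T:ℤ) - Km then buildI Km T m D J ((T:ℤ) - Km - s).toNat
             else J s) * m s t := by
      refine Finset.sum_congr rfl fun s hs => ?_
      simp only [Finset.mem_Icc] at hs
      by_cases hsb : s ≤ (T:ℤ) - Km
      · rw [hIin s (by omega) hsb, if_pos hsb]
      · rw [hIout s (by omega), if_neg hsb]
    rw [hrest]
    ring
  refine ⟨I, ⟨fun s hs => hIout s (by simpa [Finset.mem_Icc] using hs), heq⟩, ?_⟩
  rintro I' ⟨h'out, h'eq⟩
  have claim : ∀ k : ℕ, ∀ s : ℤ, (T:ℤ) - (Km:ℤ) - s = (k:ℤ) → I' s = I s := by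
    intro k
    induction k using Nat.strong_induction_on with
    | _ k ih =>
    intro s hk
    by_cases hs : 1 - (Km:ℤ) ≤ s
    · set t := s + (Km:ℤ) with hts
      have ht1 : 1 ≤ t := by omega
      have ht2 : t ≤ (T:ℤ) := by omega
      have htmem : t ∈ Finset.Icc (1:ℤ) (T:ℤ) := by simp only [Finset.mem_Icc]; omega
      have e1 := heq t htmem
      have e2 := h'eq t htmem
      rw [hsplit t ht1, Finset.sum_insert (hnotmem t)] at e1 e2
      have hrest : ∑ x ∈ Finset.Icc (t - (Km:ℤ) + 1) (t - 1), I' x * m x t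
          = ∑ x ∈ Finset.Icc (t - (Km:ℤ) + 1) (t - 1), I x * m x t := by
        refine Finset.sum_congr rfl fun x hx => ?_
        simp only [Finset.mem_Icc] at hx
        by_cases hxb : x ≤ (T:ℤ) - Km
        · have : I' x = I x := by
            refine ih ((T:ℤ) - Km - x).toNat (by omega) x (by omega)
          rw [this]
        · rw [h'out x (by simp only [Finset.mem_Icc]; omega),
              hIout x (by omega)]
      rw [hrest] at e2
      have hmul : I' (t - Km) * m (t - Km) t = I (t - Km) * m (t - Km) t := by
        linarith [e1, e2]
      have hm := (hm_pos t htmem).ne'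
      have hst : t - (Km:ℤ) = s := by omega
      rw [hst] at hmul hm
      exact mul_right_cancel₀ hm hmul
    · rw [h'out s (by simp only [Finset.mem_Icc]; omega), hIout s (by omega)]
  funext s
  by_cases hsb : s ≤ (T:ℤ) - Km
  · exact claim ((T:ℤ) - Km - s).toNat s (by omega)
  · rw [h'out s (by simp only [Finset.mem_Icc]; omega), hIout s (by omega)]
end

section
/- Assume T > K_m, m_{t−K_m, t} > 0 for every t ∈ {1, …, T}, and m_{s, s+1} > 0 for every s ∈ {T−K_m+1, …, T−1}. Then the set of all vectors (I_s)_{s = 1−K_m}^{T−1} ∈ ℝ^{T+K_m−1} satisfying Σ_{s = t−K_m}^{t−1} I_s·m_{s,t} = D_t for every t ∈ {1, …, T} is a nonempty affine subspace of ℝ^{T+K_m−1} of dimension K_m − 1. -/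
open Finset Matrix

/-!
The detections depend linearly on `I` through the `T × (T + K_m - 1)` matrix
`M t s = m s t · [t - K_m ≤ s ≤ t - 1]`. Its columns `s = t - K_m`, `t = 1, …, T`, form an
upper triangular square block with diagonal `m (t - K_m) t ≠ 0`, so `M` is surjective and the
solution set is a translate of `ker M`, of dimension `(T + K_m - 1) - T`.
-/

theorem Matrix.mulVec_surjective_of_submatrix {l m n R : Type*} [Fintype l] [Fintype n]
    [DecidableEq n] [CommRing R] (M : Matrix m n R) (e : l → n)
    (h : Function.Surjective (M.submatrix id e).mulVec) : Function.Surjective M.mulVec := by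
  intro d
  obtain ⟨J, rfl⟩ := h d
  refine ⟨(1 : Matrix n n R).submatrix (Equiv.refl n) e *ᵥ J, ?_⟩
  rw [Matrix.mulVec_mulVec, Matrix.mul_submatrix_one]
  rfl

theorem LinearMap.exists_affineSubspace_coe_eq_fiber {K V W : Type*} [Field K] [AddCommGroup V]
    [Module K V] [AddCommGroup W] [Module K W] [FiniteDimensional K V]
    (f : V →ₗ[K] W) (hf : Function.Surjective f) (d : W) :
    ∃ A : AffineSubspace K V, (A : Set V) = {x | f x = d} ∧ (A : Set V).Nonempty ∧
      Module.finrank K A.direction = Module.finrank K V - Module.finrank K W := by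
  obtain ⟨x₀, rfl⟩ := hf d
  refine ⟨AffineSubspace.mk' x₀ (LinearMap.ker f), ?_,
    ⟨x₀, AffineSubspace.self_mem_mk' _ _⟩, ?_⟩
  · ext x
    simp [AffineSubspace.mem_mk', sub_eq_zero]
  · rw [AffineSubspace.direction_mk', ← f.finrank_range_add_finrank_ker,
      LinearMap.range_eq_top.mpr hf, finrank_top, Nat.add_sub_cancel_left]

section Deconvolution

variable {K : Type*} [Field K]

noncomputable def convolutionMatrix (Km T : ℕ) (m : ℤ → ℤ → K) :
    Matrix {t : ℤ // t ∈ Icc 1 (T : ℤ)} {s : ℤ // s ∈ Icc (1 - (Km : ℤ)) (T - 1)} K :=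
  fun t s => if (s : ℤ) ∈ Icc ((t : ℤ) - Km) (t - 1) then m s t else 0

variable {Km T : ℕ}

def delayShift (hKm : 1 ≤ Km) :
    {t : ℤ // t ∈ Icc 1 (T : ℤ)} → {s : ℤ // s ∈ Icc (1 - (Km : ℤ)) (T - 1)} :=
  fun t => ⟨t - Km, by have := mem_Icc.mp t.2; rw [mem_Icc]; omega⟩

theorem convolutionMatrix_submatrix_delayShift_isUpperTriangular (hKm : 1 ≤ Km)
    (m : ℤ → ℤ → K) :
    ((convolutionMatrix Km T m).submatrix id (delayShift hKm)).IsUpperTriangular := by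
  intro t u hut
  have hlt : (u : ℤ) < t := hut
  simp only [submatrix_apply, id, convolutionMatrix, delayShift, mem_Icc]
  rw [if_neg (by omega)]

theorem convolutionMatrix_submatrix_delayShift_apply_self (hKm : 1 ≤ Km) (m : ℤ → ℤ → K)
    (t : {t : ℤ // t ∈ Icc 1 (T : ℤ)}) :
    (convolutionMatrix Km T m).submatrix id (delayShift hKm) t t = m (t - Km) t := by
  simp only [submatrix_apply, id, convolutionMatrix, delayShift, mem_Icc]
  rw [if_pos (by omega)]

theorem mulVec_convolutionMatrix_surjective (hKm : 1 ≤ Km) {m : ℤ → ℤ → K}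
    (hm : ∀ t ∈ Icc 1 (T : ℤ), m (t - Km) t ≠ 0) :
    Function.Surjective (convolutionMatrix Km T m).mulVec := by
  classical
  apply Matrix.mulVec_surjective_of_submatrix _ (delayShift hKm)
  rw [mulVec_surjective_iff_isUnit, isUnit_iff_isUnit_det,
    det_of_isUpperTriangular (convolutionMatrix_submatrix_delayShift_isUpperTriangular hKm m),
    isUnit_iff_ne_zero, prod_ne_zero_iff]
  intro t _
  rw [convolutionMatrix_submatrix_delayShift_apply_self]
  exact hm t t.2

end Deconvolution

theorem deconvolution_solution_affine_subspace_general
    (Km T : ℕ) (hKm : 1 ≤ Km)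
    (m : ℤ → ℤ → ℝ)
    (D : ℤ → ℝ)
    (hm_pos : ∀ t ∈ Finset.Icc (1 : ℤ) (T : ℤ), 0 < m (t - Km) t) :
    ∃ A : AffineSubspace ℝ ({s : ℤ // s ∈ Finset.Icc (1 - (Km : ℤ)) ((T : ℤ) - 1)} → ℝ),
      (A : Set ({s : ℤ // s ∈ Finset.Icc (1 - (Km : ℤ)) ((T : ℤ) - 1)} → ℝ))
        = {I | ∀ t ∈ Finset.Icc (1 : ℤ) (T : ℤ),
            (∑ s : {s : ℤ // s ∈ Finset.Icc (1 - (Km : ℤ)) ((T : ℤ) - 1)},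
              if (s : ℤ) ∈ Finset.Icc (t - Km) (t - 1) then I s * m s t else 0) = D t} ∧
      (A : Set ({s : ℤ // s ∈ Finset.Icc (1 - (Km : ℤ)) ((T : ℤ) - 1)} → ℝ)).Nonempty ∧
      Module.finrank ℝ A.direction = Km - 1 := by
  have hsurj := mulVec_convolutionMatrix_surjective hKm fun t ht => (hm_pos t ht).ne'
  obtain ⟨A, hA, hne, hdim⟩ :=
    (convolutionMatrix Km T m).mulVecLin.exists_affineSubspace_coe_eq_fiber hsurj (fun t => D t)
  refine ⟨A, hA.trans ?_, hne, hdim.trans ?_⟩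
  · ext I
    simp only [Set.mem_ofPred_eq, mulVecLin_apply, funext_iff, Subtype.forall, mulVec, dotProduct,
      convolutionMatrix, ite_mul, zero_mul, mul_comm (m _ _)]
  · simp only [Module.finrank_fintype_fun_eq_card, Fintype.card_coe, Int.card_Icc]
    omega

/-- If `T > K_m`, `m_{t−K_m,t} > 0` for all `t`, and `m_{s,s+1} > 0` for
`s = T−K_m+1, …, T−1`, then the set of solutions `(I_s)_{s=1−K_m}^{T−1} ∈ ℝ^{T+K_m−1}` of
the deconvolution equations is a nonempty affine subspace of dimension `K_m − 1`. -/
theorem deconvolution_solution_affine_subspace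
    (Km T : ℕ) (hKm : 1 ≤ Km) (hT : 1 ≤ T)
    (m : ℤ → ℤ → ℝ)
    (hm_nonneg : ∀ s t : ℤ, s ∈ Finset.Icc (1 - (Km : ℤ)) ((T : ℤ) - 1) →
      t ∈ Finset.Icc (1 : ℤ) (T : ℤ) → 0 ≤ m s t)
    (hm_zero : ∀ s t : ℤ, s ∈ Finset.Icc (1 - (Km : ℤ)) ((T : ℤ) - 1) →
      t ∈ Finset.Icc (1 : ℤ) (T : ℤ) → ¬(1 ≤ t - s ∧ t - s ≤ (Km : ℤ)) → m s t = 0)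
    (D : ℤ → ℝ)
    (hTKm : Km < T)
    (hm_pos : ∀ t ∈ Finset.Icc (1 : ℤ) (T : ℤ), 0 < m (t - Km) t)
    (hm_pos' : ∀ s ∈ Finset.Icc ((T : ℤ) - Km + 1) ((T : ℤ) - 1), 0 < m s (s + 1)) :
    ∃ A : AffineSubspace ℝ ({s : ℤ // s ∈ Finset.Icc (1 - (Km : ℤ)) ((T : ℤ) - 1)} → ℝ),
      (A : Set ({s : ℤ // s ∈ Finset.Icc (1 - (Km : ℤ)) ((T : ℤ) - 1)} → ℝ))
        = {I | ∀ t ∈ Finset.Icc (1 : ℤ) (T : ℤ),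
            (∑ s : {s : ℤ // s ∈ Finset.Icc (1 - (Km : ℤ)) ((T : ℤ) - 1)},
              if (s : ℤ) ∈ Finset.Icc (t - Km) (t - 1) then I s * m s t else 0) = D t} ∧
      (A : Set ({s : ℤ // s ∈ Finset.Icc (1 - (Km : ℤ)) ((T : ℤ) - 1)} → ℝ)).Nonempty ∧
      Module.finrank ℝ A.direction = Km - 1 :=
  deconvolution_solution_affine_subspace_general Km T hKm m D hm_pos
end

section
/- Assume m_{t−K_m, t} > 0 for every t ∈ {1, …, T}, b_s > 0 for every s, and D_t > 0 for every t. If I is a vector with I_s > 0 for every s ∈ {1−K_m, …, T−1} and F(I) = I (a positive fixed point of the EM map), then E_t(I) = D_t for every t ∈ {1, …, T}; that is, I solves the deconvolution equations Σ_{s = t−K_m}^{t−1} I_s·m_{s,t} = D_t for all t. -/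
open Finset

/-- `E_t(I) = ∑_s I_s m_{s,t}`, the expected detections on day `t` given incidences `I`. -/
noncomputable def Edet (Km T : ℕ) (m : ℤ → ℤ → ℝ) (I : ℤ → ℝ) (t : ℤ) : ℝ :=
  ∑ s ∈ Finset.Icc (1 - (Km : ℤ)) ((T : ℤ) - 1), I s * m s t

/-- `b_s = ∑_{t=1}^T m_{s,t}`. -/
noncomputable def bsum (T : ℕ) (m : ℤ → ℤ → ℝ) (s : ℤ) : ℝ :=
  ∑ t ∈ Finset.Icc (1 : ℤ) (T : ℤ), m s t

/-- The EM (Richardson–Lucy) map `F(I)_s = (I_s / b_s) ∑_t m_{s,t} D_t / E_t(I)`. -/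
noncomputable def EMmap (Km T : ℕ) (m : ℤ → ℤ → ℝ) (D : ℤ → ℝ) (I : ℤ → ℝ) : ℤ → ℝ :=
  fun s => I s / bsum T m s *
    ∑ t ∈ Finset.Icc (1 : ℤ) (T : ℤ), m s t * D t / Edet Km T m I t

/-- A strictly positive fixed point of the EM map solves the deconvolution equations:
`E_t(I) = D_t`, i.e. `∑_{s=t−K_m}^{t−1} I_s m_{s,t} = D_t` for all `t`. -/
theorem EMmap_fixed_point_solves_deconvolution
    (Km T : ℕ) (hKm : 1 ≤ Km) (hT : 1 ≤ T)
    (m : ℤ → ℤ → ℝ)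
    (hm_nonneg : ∀ s t : ℤ, s ∈ Finset.Icc (1 - (Km : ℤ)) ((T : ℤ) - 1) →
      t ∈ Finset.Icc (1 : ℤ) (T : ℤ) → 0 ≤ m s t)
    (hm_zero : ∀ s t : ℤ, s ∈ Finset.Icc (1 - (Km : ℤ)) ((T : ℤ) - 1) →
      t ∈ Finset.Icc (1 : ℤ) (T : ℤ) → ¬(1 ≤ t - s ∧ t - s ≤ (Km : ℤ)) → m s t = 0)
    (D : ℤ → ℝ)
    (hm_pos : ∀ t ∈ Finset.Icc (1 : ℤ) (T : ℤ), 0 < m (t - Km) t)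
    (hb_pos : ∀ s ∈ Finset.Icc (1 - (Km : ℤ)) ((T : ℤ) - 1), 0 < bsum T m s)
    (hD_pos : ∀ t ∈ Finset.Icc (1 : ℤ) (T : ℤ), 0 < D t)
    (I : ℤ → ℝ)
    (hI_pos : ∀ s ∈ Finset.Icc (1 - (Km : ℤ)) ((T : ℤ) - 1), 0 < I s)
    (hfix : ∀ s ∈ Finset.Icc (1 - (Km : ℤ)) ((T : ℤ) - 1), EMmap Km T m D I s = I s) :
    ∀ t ∈ Finset.Icc (1 : ℤ) (T : ℤ),
      Edet Km T m I t = D t ∧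
      ∑ s ∈ Finset.Icc (t - Km) (t - 1), I s * m s t = D t := by
  have hE_pos : ∀ t ∈ Finset.Icc (1:ℤ) (T:ℤ), 0 < Edet Km T m I t := by
    intro t ht
    simp only [Finset.mem_Icc] at ht
    have hs : (t - (Km:ℤ)) ∈ Finset.Icc (1 - (Km:ℤ)) ((T:ℤ) - 1) := by
      simp only [Finset.mem_Icc]; omega
    apply Finset.sum_pos'
    · intro s hs'
      exact mul_nonneg (hI_pos s hs').le
        (hm_nonneg s t hs' (by simp only [Finset.mem_Icc]; omega))
    · exact ⟨t - Km, hs, mul_pos (hI_pos _ hs)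
        (hm_pos t (by simp only [Finset.mem_Icc]; omega))⟩
  have hfix' : ∀ s ∈ Finset.Icc (1 - (Km:ℤ)) ((T:ℤ) - 1),
      ∑ t ∈ Finset.Icc (1:ℤ) (T:ℤ), m s t * D t / Edet Km T m I t = bsum T m s := by
    intro s hs
    have h := hfix s hs
    unfold EMmap at h
    have hb := (hb_pos s hs).ne'
    have hI := (hI_pos s hs).ne'
    have h2 : I s * (∑ t ∈ Finset.Icc (1:ℤ) (T:ℤ), m s t * D t / Edet Km T m I t)
        = I s * bsum T m s := by
      rw [div_mul_eq_mul_div, div_eq_iff hb] at h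
      linarith [h]
    exact mul_left_cancel₀ hI h2
  have key : ∀ n : ℕ, ∀ t : ℤ, 1 ≤ t → t ≤ (T:ℤ) → t ≤ (n:ℤ) → Edet Km T m I t = D t := by
    intro n
    induction n with
    | zero => intro t h1 _ h0; omega
    | succ n ih =>
      intro t h1 h2 h3
      by_cases hc : t ≤ (n:ℤ)
      · exact ih t h1 h2 hc
      · set s := t - (Km:ℤ) with hs_def
        have hsS : s ∈ Finset.Icc (1 - (Km:ℤ)) ((T:ℤ) - 1) := by
          simp only [Finset.mem_Icc, hs_def]; omega
        have hG := hfix' s hsS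
        unfold bsum at hG
        have hsum : ∑ t' ∈ Finset.Icc (1:ℤ) (T:ℤ),
            (m s t' * D t' / Edet Km T m I t' - m s t') = 0 := by
          rw [Finset.sum_sub_distrib, hG, sub_self]
        have hsingle : ∀ t' ∈ Finset.Icc (1:ℤ) (T:ℤ), t' ≠ t →
            m s t' * D t' / Edet Km T m I t' - m s t' = 0 := by
          intro t' ht' hne
          have ht'' := ht'
          simp only [Finset.mem_Icc] at ht''
          rcases lt_or_gt_of_ne hne with hlt | hgt
          · have hE : Edet Km T m I t' = D t' := ih t' ht''.1 ht''.2 (by omega)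
            have hDne : D t' ≠ 0 := (hD_pos t' ht').ne'
            rw [hE, mul_div_assoc, div_self hDne, mul_one, sub_self]
          · have hz : m s t' = 0 := by
              apply hm_zero s t' hsS ht'
              push_neg
              intro _; omega
            simp [hz]
        have htmem : t ∈ Finset.Icc (1:ℤ) (T:ℤ) := by simp only [Finset.mem_Icc]; omega
        rw [Finset.sum_eq_single_of_mem t htmem (fun b hb hne => hsingle b hb hne)] at hsum
        have hmpos := hm_pos t htmem
        have hEpos := hE_pos t htmem
        have hEne := hEpos.ne'
        have h4 : m s t * D t = m s t * Edet Km T m I t := by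
          have h5 : m s t * D t / Edet Km T m I t = m s t := by linarith
          rw [div_eq_iff hEne] at h5
          linarith
        have h6 := mul_left_cancel₀ hmpos.ne' h4
        linarith
  intro t ht
  have ht' := ht
  simp only [Finset.mem_Icc] at ht'
  have hmain : Edet Km T m I t = D t := by
    apply key T t ht'.1 ht'.2
    omega
  refine ⟨hmain, ?_⟩
  rw [← hmain]
  unfold Edet
  apply Finset.sum_subset
  · intro s hs
    simp only [Finset.mem_Icc] at hs ⊢
    omega
  · intro s hsS hsNot
    simp only [Finset.mem_Icc] at hsNot
    have : m s t = 0 := by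
      apply hm_zero s t (by assumption) ht
      omega
    simp [this]
end

section
/- Assume m_{t−K_m, t} > 0 for every t ∈ {1, …, T}, b_s > 0 for every s, and D_t > 0 for every t. Define ℓ(I) = Σ_{t=1}^T ( −E_t(I) + D_t·log E_t(I) ) for vectors I with all entries strictly positive. Then for every I with I_s > 0 for all s, one EM iteration does not decrease ℓ: ℓ(F(I)) ≥ ℓ(I). -/
open Finset

/-- The Poisson-type log-likelihood `ℓ(I) = ∑_t (−E_t(I) + D_t log E_t(I))`. -/
noncomputable def loglik (Km T : ℕ) (m : ℤ → ℤ → ℝ) (D : ℤ → ℝ) (I : ℤ → ℝ) : ℝ :=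
  ∑ t ∈ Finset.Icc (1 : ℤ) (T : ℤ),
    (-(Edet Km T m I t) + D t * Real.log (Edet Km T m I t))

/-- `x log x ≥ x - 1` for `x > 0`. -/
lemma xlogx_ge (x : ℝ) (hx : 0 < x) : x - 1 ≤ x * Real.log x := by
  have h := Real.log_le_sub_one_of_pos (inv_pos.mpr hx)
  rw [Real.log_inv] at h
  have hx1 : x * x⁻¹ = 1 := mul_inv_cancel₀ hx.ne'
  nlinarith

/-- Tangent line bound for `log`. -/
lemma log_le_tangent (a x : ℝ) (ha : 0 < a) (hx : 0 < x) :
    Real.log x ≤ Real.log a + (x - a) / a := by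
  have h := Real.log_le_sub_one_of_pos (div_pos hx ha)
  rw [Real.log_div hx.ne' ha.ne'] at h
  have h2 : (x - a) / a = x / a - 1 := by field_simp
  linarith

/-- One EM iteration does not decrease the Poisson log-likelihood:
`ℓ(F(I)) ≥ ℓ(I)` for every strictly positive `I`. -/
theorem EMmap_increases_loglik
    (Km T : ℕ) (hKm : 1 ≤ Km) (hT : 1 ≤ T)
    (m : ℤ → ℤ → ℝ)
    (hm_nonneg : ∀ s t : ℤ, s ∈ Finset.Icc (1 - (Km : ℤ)) ((T : ℤ) - 1) →
      t ∈ Finset.Icc (1 : ℤ) (T : ℤ) → 0 ≤ m s t)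
    (hm_zero : ∀ s t : ℤ, s ∈ Finset.Icc (1 - (Km : ℤ)) ((T : ℤ) - 1) →
      t ∈ Finset.Icc (1 : ℤ) (T : ℤ) → ¬(1 ≤ t - s ∧ t - s ≤ (Km : ℤ)) → m s t = 0)
    (D : ℤ → ℝ)
    (hm_pos : ∀ t ∈ Finset.Icc (1 : ℤ) (T : ℤ), 0 < m (t - Km) t)
    (hb_pos : ∀ s ∈ Finset.Icc (1 - (Km : ℤ)) ((T : ℤ) - 1), 0 < bsum T m s)
    (hD_pos : ∀ t ∈ Finset.Icc (1 : ℤ) (T : ℤ), 0 < D t)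
    (I : ℤ → ℝ)
    (hI_pos : ∀ s ∈ Finset.Icc (1 - (Km : ℤ)) ((T : ℤ) - 1), 0 < I s) :
    loglik Km T m D I ≤ loglik Km T m D (EMmap Km T m D I) := by
  set S := Finset.Icc (1 - (Km : ℤ)) ((T : ℤ) - 1) with hS
  set TT := Finset.Icc (1 : ℤ) (T : ℤ) with hTT
  set E : ℤ → ℝ := fun t => Edet Km T m I t with hEdef
  set I' : ℤ → ℝ := EMmap Km T m D I with hI'def0
  set E' : ℤ → ℝ := fun t => Edet Km T m I' t with hE'def
  set c : ℤ → ℝ := fun s => ∑ t ∈ TT, m s t * D t / E t with hcdef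
  have hmem : ∀ t ∈ TT, (t - (Km : ℤ)) ∈ S := by
    intro t ht
    simp only [hTT, Finset.mem_Icc] at ht
    simp only [hS, Finset.mem_Icc]
    omega
  have hE_pos : ∀ t ∈ TT, 0 < E t := by
    intro t ht
    apply Finset.sum_pos'
    · intro s hs; exact mul_nonneg (hI_pos s hs).le (hm_nonneg s t hs ht)
    · exact ⟨t - Km, hmem t ht, mul_pos (hI_pos _ (hmem t ht)) (hm_pos t ht)⟩
  have hc_pos : ∀ s ∈ S, 0 < c s := by
    intro s hs
    have hex : ∃ t ∈ TT, 0 < m s t := by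
      by_contra h
      push_neg at h
      have hz : bsum T m s = 0 :=
        Finset.sum_eq_zero fun t ht => le_antisymm (h t ht) (hm_nonneg s t hs ht)
      exact absurd hz (hb_pos s hs).ne'
    obtain ⟨t0, ht0, hmt0⟩ := hex
    apply Finset.sum_pos'
    · intro t ht
      exact div_nonneg (mul_nonneg (hm_nonneg s t hs ht) (hD_pos t ht).le) (hE_pos t ht).le
    · exact ⟨t0, ht0, div_pos (mul_pos hmt0 (hD_pos t0 ht0)) (hE_pos t0 ht0)⟩
  have hI'def : ∀ s, I' s = I s / bsum T m s * c s := fun s => rfl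
  have hI'_pos : ∀ s ∈ S, 0 < I' s := by
    intro s hs
    rw [hI'def]
    exact mul_pos (div_pos (hI_pos s hs) (hb_pos s hs)) (hc_pos s hs)
  have hE'_pos : ∀ t ∈ TT, 0 < E' t := by
    intro t ht
    apply Finset.sum_pos'
    · intro s hs; exact mul_nonneg (hI'_pos s hs).le (hm_nonneg s t hs ht)
    · exact ⟨t - Km, hmem t ht, mul_pos (hI'_pos _ (hmem t ht)) (hm_pos t ht)⟩
  -- Jensen step per t
  have jensen : ∀ t ∈ TT,
      ∑ s ∈ S, (I s * m s t / E t) * Real.log (I' s / I s)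
        ≤ Real.log (E' t) - Real.log (E t) := by
    intro t ht
    have hEt := hE_pos t ht
    have hE't := hE'_pos t ht
    have hA : 0 < E' t / E t := div_pos hE't hEt
    have key : ∀ s ∈ S,
        (I s * m s t / E t) * Real.log (I' s / I s)
          ≤ (I s * m s t / E t) * (Real.log (E' t) - Real.log (E t))
            + I' s * m s t / E' t - I s * m s t / E t := by
      intro s hs
      have hIs := hI_pos s hs
      have hI's := hI'_pos s hs
      have hr : 0 < I' s / I s := div_pos hI's hIs
      have h1 := log_le_tangent (E' t / E t) (I' s / I s) hA hr
      have hw : 0 ≤ I s * m s t / E t :=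
        div_nonneg (mul_nonneg hIs.le (hm_nonneg s t hs ht)) hEt.le
      have h2 := mul_le_mul_of_nonneg_left h1 hw
      rw [Real.log_div hE't.ne' hEt.ne'] at h2
      have heq : (I s * m s t / E t) *
            (Real.log (E' t) - Real.log (E t) + (I' s / I s - E' t / E t) / (E' t / E t))
          = (I s * m s t / E t) * (Real.log (E' t) - Real.log (E t))
            + I' s * m s t / E' t - I s * m s t / E t := by
        field_simp
        ring
      linarith [heq ▸ h2]
    have hsum := Finset.sum_le_sum key
    have hw1 : ∑ s ∈ S, I s * m s t / E t = 1 := by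
      rw [← Finset.sum_div]
      exact div_self hEt.ne'
    have hw1' : ∑ s ∈ S, I' s * m s t / E' t = 1 := by
      rw [← Finset.sum_div]
      exact div_self hE't.ne'
    calc ∑ s ∈ S, (I s * m s t / E t) * Real.log (I' s / I s)
        ≤ ∑ s ∈ S, ((I s * m s t / E t) * (Real.log (E' t) - Real.log (E t))
            + I' s * m s t / E' t - I s * m s t / E t) := hsum
      _ = (∑ s ∈ S, I s * m s t / E t) * (Real.log (E' t) - Real.log (E t))
            + (∑ s ∈ S, I' s * m s t / E' t) - ∑ s ∈ S, I s * m s t / E t := by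
          rw [Finset.sum_sub_distrib, Finset.sum_add_distrib, Finset.sum_mul]
      _ = Real.log (E' t) - Real.log (E t) := by rw [hw1, hw1']; ring
  -- per-t main inequality
  have main : ∀ t ∈ TT,
      (-(E t) + D t * Real.log (E t))
        + ((E t - E' t) + D t * ∑ s ∈ S, (I s * m s t / E t) * Real.log (I' s / I s))
      ≤ -(E' t) + D t * Real.log (E' t) := by
    intro t ht
    have h := mul_le_mul_of_nonneg_left (jensen t ht) (hD_pos t ht).le
    have h2 : D t * (Real.log (E' t) - Real.log (E t))
        = D t * Real.log (E' t) - D t * Real.log (E t) := mul_sub _ _ _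
    linarith
  -- rewrite logliks
  have hll : loglik Km T m D I = ∑ t ∈ TT, (-(E t) + D t * Real.log (E t)) := rfl
  have hll' : loglik Km T m D (EMmap Km T m D I)
      = ∑ t ∈ TT, (-(E' t) + D t * Real.log (E' t)) := rfl
  have step : loglik Km T m D I
      + ∑ t ∈ TT, ((E t - E' t) + D t * ∑ s ∈ S, (I s * m s t / E t) * Real.log (I' s / I s))
      ≤ loglik Km T m D (EMmap Km T m D I) := by
    rw [hll, hll', ← Finset.sum_add_distrib]
    exact Finset.sum_le_sum main
  -- swap sums
  have hswap : ∑ t ∈ TT, ((E t - E' t) + D t * ∑ s ∈ S, (I s * m s t / E t) * Real.log (I' s / I s))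
      = ∑ s ∈ S, ((I s - I' s) * bsum T m s + I s * Real.log (I' s / I s) * c s) := by
    have lhs_eq : ∀ t ∈ TT,
        (E t - E' t) + D t * ∑ s ∈ S, (I s * m s t / E t) * Real.log (I' s / I s)
        = ∑ s ∈ S, ((I s - I' s) * m s t
            + (I s * Real.log (I' s / I s)) * (m s t * D t / E t)) := by
      intro t ht
      rw [Finset.sum_add_distrib]
      congr 1
      · simp only [sub_mul]
        rw [Finset.sum_sub_distrib]
        rfl
      · rw [Finset.mul_sum]
        apply Finset.sum_congr rfl
        intro s hs
        ring
    rw [Finset.sum_congr rfl lhs_eq, Finset.sum_comm]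
    apply Finset.sum_congr rfl
    intro s hs
    rw [Finset.sum_add_distrib, ← Finset.mul_sum, ← Finset.mul_sum]
    rfl
  -- per-s nonnegativity
  have pers : ∀ s ∈ S, 0 ≤ (I s - I' s) * bsum T m s + I s * Real.log (I' s / I s) * c s := by
    intro s hs
    have hb := hb_pos s hs
    have hIs := hI_pos s hs
    have hcs := hc_pos s hs
    set x := c s / bsum T m s with hx
    have hxpos : 0 < x := div_pos hcs hb
    have hrx : I' s / I s = x := by
      rw [hI'def, hx]
      field_simp
    have hcx : c s = x * bsum T m s := by
      rw [hx]; field_simp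
    have hI'eq : I' s = I s * x := by
      rw [hI'def, hx]
      field_simp
    rw [hrx, hI'eq, hcx]
    have hkey := xlogx_ge x hxpos
    nlinarith [mul_pos hIs hb, mul_le_mul_of_nonneg_left hkey (mul_pos hIs hb).le]
  have h0 : 0 ≤ ∑ t ∈ TT,
      ((E t - E' t) + D t * ∑ s ∈ S, (I s * m s t / E t) * Real.log (I' s / I s)) := by
    rw [hswap]
    exact Finset.sum_nonneg pers
  linarith
end

section
/- Let λ ∈ ℝ, C > 0, and define I_t = C·exp(λ t) for all integers t, and D_t = Σ_{k=1}^{K_m} m_{t−k, t}·I_{t−k}. Then D_t = C'·exp(λ t)·w_{t mod 7} for all integers t, where C' = C·Σ_{k=1}^{K_m} m⁰_k·exp(−λ k)/S_{k mod 7}. In particular, an exponential trend in incidences produces the same exponential trend in expected detections, up to a multiplicative constant and the multiplicative weekday effect. -/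
open Finset

/-- Under the multiplicative weekday modification of the delay distribution, an
exponential trend in incidences `I_t = C e^{λt}` produces detections
`D_t = C' e^{λt} w_{t mod 7}`: the same exponential trend, up to a multiplicative
constant `C'` and the multiplicative weekday effect. -/
theorem weekday_modification_exponential_trend
    (Km : ℕ) (hKm : 7 ≤ Km)
    (m0 : ℕ → ℝ) (hm0_pos : ∀ k ∈ Finset.Icc 1 Km, 0 < m0 k)
    (S : ℕ → ℝ)
    (hS : ∀ r : ℕ, S r = ∑ k' ∈ (Finset.Icc 1 Km).filter (fun k' => k' % 7 = r), m0 k')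
    (w : ℕ → ℝ) (hw_pos : ∀ i < 7, 0 < w i)
    (hw_sum : ∑ i ∈ Finset.range 7, w i = ∑ k ∈ Finset.Icc 1 Km, m0 k)
    (m : ℤ → ℤ → ℝ)
    (hm : ∀ s : ℤ, ∀ k ∈ Finset.Icc 1 Km,
      m s (s + (k : ℤ)) = w (((s + (k : ℤ)) % 7).toNat) * m0 k / S (k % 7))
    (lam C : ℝ) (hC : 0 < C)
    (I : ℤ → ℝ) (hI : ∀ t : ℤ, I t = C * Real.exp (lam * t))
    (D : ℤ → ℝ)
    (hD : ∀ t : ℤ, D t = ∑ k ∈ Finset.Icc 1 Km, m (t - (k : ℤ)) t * I (t - (k : ℤ)))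
    (C' : ℝ)
    (hC' : C' = C * ∑ k ∈ Finset.Icc 1 Km, m0 k * Real.exp (-lam * k) / S (k % 7)) :
    ∀ t : ℤ, D t = C' * Real.exp (lam * t) * w ((t % 7).toNat) := by
  intro t
  have key : ∀ k ∈ Finset.Icc 1 Km,
      m (t - (k : ℤ)) t * I (t - (k : ℤ)) =
        C * (m0 k * Real.exp (-lam * k) / S (k % 7)) * Real.exp (lam * t) *
          w ((t % 7).toNat) := by
    intro k hk
    have hm' := hm (t - (k : ℤ)) k hk
    rw [sub_add_cancel] at hm'
    rw [hm', hI]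
    push_cast
    rw [show lam * ((t : ℝ) - k) = lam * t + (-lam * k) by ring, Real.exp_add]
    ring
  rw [hD t, Finset.sum_congr rfl key, ← Finset.sum_mul, ← Finset.sum_mul,
    ← Finset.mul_sum, hC']
end
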